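/- Let Y be a compact metrizable space, B a Boolean algebra of regular closed subsets of Y (with operations ∨ = union, ∧ = closure of interior of intersection, complement F' = closure(Fᶜ)) whose members' interiors form a basis of Y, and let p : S(B) → Y be the canonical projection from the Stone space given by {p(x)} = ⋂_{F∈x} F. Then p(F̃) = F for every F ∈ B, where F̃ = {x ∈ S(B) : F ∈ x}. -/
import Mathlib


/-- Ultrafilters on a Boolean algebra `B` of regular closed subsets of `Y`,
where meet is `F₁ ∧ F₂ = closure (interior (F₁ ∩ F₂))` and complement is
`F' = closure Fᶜ`: the points of the Stone space of `B`. -/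
abbrev StonePoint {Y : Type*} [TopologicalSpace Y] (B : Set (Set Y)) : Type _ :=
  {x : Set (Set Y) // x ⊆ B ∧ Set.univ ∈ x ∧ ∅ ∉ x ∧
    (∀ F₁ ∈ x, ∀ F₂ ∈ x, closure (interior (F₁ ∩ F₂)) ∈ x) ∧
    (∀ F ∈ x, ∀ G ∈ B, F ⊆ G → G ∈ x) ∧
    (∀ F ∈ B, F ∈ x ∨ closure Fᶜ ∈ x)}

/-- With `Y` compact metrizable and `B` a Boolean algebra of regular closed
subsets of `Y` whose members' interiors form a basis, the canonical projection
`p : S(B) → Y` (characterized by `{p x} = ⋂ F ∈ x, F`) satisfies `p(F̃) = F` for every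
`F ∈ B`, where `F̃ = {x | F ∈ x}`. -/
theorem stone_projection_image_of_basic_clopen
    {Y : Type*} [TopologicalSpace Y] [CompactSpace Y] [TopologicalSpace.MetrizableSpace Y]
    (B : Set (Set Y)) (hcount : B.Countable)
    (hreg : ∀ F ∈ B, closure (interior F) = F)
    (hbot : ∅ ∈ B) (htop : Set.univ ∈ B)
    (hsup : ∀ F₁ ∈ B, ∀ F₂ ∈ B, F₁ ∪ F₂ ∈ B)
    (hinf : ∀ F₁ ∈ B, ∀ F₂ ∈ B, closure (interior (F₁ ∩ F₂)) ∈ B)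
    (hcompl : ∀ F ∈ B, closure Fᶜ ∈ B)
    (hbasis : TopologicalSpace.IsTopologicalBasis {U : Set Y | ∃ F ∈ B, U = interior F})
    (p : StonePoint B → Y) (hp : ∀ x : StonePoint B, ⋂₀ x.1 = {p x}) :
    ∀ F ∈ B, p '' {x : StonePoint B | F ∈ x.1} = F := by
  intro F hF
  apply Set.Subset.antisymm
  · rintro _ ⟨x, hx, rfl⟩
    have hpx : p x ∈ ⋂₀ x.1 := by rw [hp x]; exact rfl
    exact hpx F hx
  · intro y hy
    -- the "bad" meager set of boundaries
    set D : Set Y := ⋃ H ∈ B, frontier (interior H) with hD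
    have hDc : Dᶜ ∈ residual Y := by
      rw [hD, Set.compl_iUnion₂]
      refine (countable_bInter_mem hcount).mpr fun H hH => ?_
      refine residual_of_dense_open (isClosed_frontier.isOpen_compl) ?_
      rw [isOpen_interior.frontier_eq]
      have : interior ((closure (interior H)) \ interior H) = ∅ := by
        have h1 : interior ((closure (interior H)) \ interior H) ⊆
            closure (interior H) \ interior H := interior_subset
        by_contra hne
        obtain ⟨z, hz⟩ := Set.nonempty_iff_ne_empty.mpr hne
        have hzo : z ∈ interior (closure (interior H) \ interior H) := hz
        have : z ∈ interior (closure (interior H)) \ interior H := by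
          constructor
          · exact interior_mono Set.diff_subset hzo
          · exact (h1 hzo).2
        -- z has an open nbhd inside closure (interior H) \ interior H,
        -- but z ∈ closure (interior H), so nbhd meets interior H: contradiction
        have hmem : z ∈ closure (interior H) := (h1 hzo).1
        have hnb : interior (closure (interior H) \ interior H) ∈ nhds z :=
          isOpen_interior.mem_nhds hzo
        rcases mem_closure_iff_nhds.mp hmem _ hnb with ⟨w, hw1, hw2⟩
        exact (h1 hw1).2 hw2
      rw [← interior_eq_empty_iff_dense_compl]
      exact this
    have hDdense : Dense Dᶜ := dense_of_mem_residual hDc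
    -- y is in the closure of interior F \ D
    have hcl : y ∈ closure (interior F ∩ Dᶜ) := by
      rw [mem_closure_iff_nhds]
      intro V hV
      rcases mem_nhds_iff.mp hV with ⟨U, hUV, hUo, hyU⟩
      have hyF : y ∈ closure (interior F) := by rw [hreg F hF]; exact hy
      rcases mem_closure_iff_nhds.mp hyF U (hUo.mem_nhds hyU) with ⟨z, hzU, hzF⟩
      have : (U ∩ interior F).Nonempty := ⟨z, hzU, hzF⟩
      rcases hDdense.inter_open_nonempty _ (hUo.inter isOpen_interior) this with
        ⟨w, ⟨hwU, hwF⟩, hwD⟩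
      exact ⟨w, hUV hwU, hwF, hwD⟩
    -- pick a sequence in interior F \ D converging to y
    obtain ⟨f, hf, hftend⟩ := mem_closure_iff_seq_limit.mp hcl
    -- the ultrafilter
    set 𝒰 : Ultrafilter Y := Ultrafilter.of (Filter.map f Filter.atTop) with h𝒰def
    have h𝒰le : (𝒰 : Filter Y) ≤ Filter.map f Filter.atTop := Ultrafilter.of_le _
    have h𝒰nhds : (𝒰 : Filter Y) ≤ nhds y := h𝒰le.trans hftend
    have hmemall : ∀ s : Set Y, (∀ n, f n ∈ s) → s ∈ 𝒰 := fun s hs =>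
      h𝒰le (Filter.mem_map.mpr (Filter.univ_mem' hs))
    have hFmem : interior F ∈ 𝒰 := hmemall _ fun n => (hf n).1
    have hDmem : Dᶜ ∈ 𝒰 := hmemall _ fun n => (hf n).2
    -- construct the Stone point
    set xs : Set (Set Y) := {G | G ∈ B ∧ interior G ∈ 𝒰} with hxs
    have hsubB : xs ⊆ B := fun G hG => hG.1
    have huniv : Set.univ ∈ xs := ⟨htop, by rw [interior_univ]; exact Filter.univ_mem⟩
    have hempty : ∅ ∉ xs := fun h =>
      𝒰.neBot.ne' (Filter.empty_mem_iff_bot.mp (by simpa using h.2))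
    have hmeet : ∀ G₁ ∈ xs, ∀ G₂ ∈ xs, closure (interior (G₁ ∩ G₂)) ∈ xs := by
      intro G₁ hG₁ G₂ hG₂
      refine ⟨hinf G₁ hG₁.1 G₂ hG₂.1, ?_⟩
      have h12 : interior G₁ ∩ interior G₂ ∈ 𝒰 := Filter.inter_mem hG₁.2 hG₂.2
      have hsub : interior G₁ ∩ interior G₂ ⊆ closure (interior (G₁ ∩ G₂)) := by
        rw [← interior_inter]; exact subset_closure
      exact Filter.mem_of_superset h12
        (interior_maximal hsub (isOpen_interior.inter isOpen_interior))
    have hup : ∀ G ∈ xs, ∀ H ∈ B, G ⊆ H → H ∈ xs := by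
      intro G hG H hH hGH
      exact ⟨hH, Filter.mem_of_superset hG.2 (interior_mono hGH)⟩
    have hultra : ∀ H ∈ B, H ∈ xs ∨ closure Hᶜ ∈ xs := by
      intro H hH
      rcases 𝒰.mem_or_compl_mem (interior H) with h | h
      · exact Or.inl ⟨hH, h⟩
      · refine Or.inr ⟨hcompl H hH, ?_⟩
        have hfr : (frontier (interior H))ᶜ ∈ 𝒰 := by
          refine Filter.mem_of_superset hDmem (Set.compl_subset_compl.mpr ?_)
          exact Set.subset_iUnion₂ (s := fun H _ => frontier (interior H)) H hH
        refine Filter.mem_of_superset (Filter.inter_mem h hfr) ?_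
        intro z ⟨hz1, hz2⟩
        have hzncl : z ∉ closure (interior H) := by
          intro hzc
          exact hz2 ⟨hzc, by rwa [interior_interior]⟩
        have hopen : IsOpen (closure (interior H))ᶜ := isClosed_closure.isOpen_compl
        have hsub : (closure (interior H))ᶜ ⊆ closure Hᶜ := by
          rw [closure_compl]
          exact Set.compl_subset_compl.mpr subset_closure
        exact interior_maximal hsub hopen hzncl
    set x : StonePoint B := ⟨xs, hsubB, huniv, hempty, hmeet, hup, hultra⟩ with hxdef
    have hFx : F ∈ x.1 := ⟨hF, hFmem⟩
    have hyx : y ∈ ⋂₀ x.1 := by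
      intro G hG
      have hGB := hsubB hG
      rw [← hreg G hGB]
      rw [mem_closure_iff_nhds]
      intro V hV
      have : V ∩ interior G ∈ 𝒰 := Filter.inter_mem (h𝒰nhds hV) hG.2
      exact 𝒰.nonempty_of_mem this
    rw [hp x] at hyx
    exact ⟨x, hFx, hyx.symm⟩
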